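/- arXiv:math/0311120 — 7 statements merged into one kernel-verified Lean document; each statement's English description precedes it below -/
import Mathlib

section
/- Let q be a prime power, F a finite field with q elements, and n a positive integer with n | q - 1. Then there exists a ∈ F such that the polynomial X^n - a is irreducible over F. -/
/-!
Let `ζ` be a primitive `n (q - 1)`-th root of unity in an algebraic closure of `F`. Then `ζ ^ n`
is a `(q - 1)`-th root of unity, so `ζ ^ n = a` for some `a ∈ F`. If `F(ζ)` has degree `d`, then
`ζ ^ (q ^ d - 1) = 1`, so `n (q - 1) ∣ q ^ d - 1`; as `(q ^ d - 1) / (q - 1) = 1 + q + ⋯ + q ^ (d - 1)`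
is `d` modulo `n`, this forces `n ∣ d`. Hence the minimal polynomial of `ζ`, a divisor of
`X ^ n - a`, has degree at least `n` and is `X ^ n - a`.
-/

open Polynomial IntermediateField

theorem Nat.dvd_of_mul_sub_one_dvd_pow_sub_one {q n d : ℕ} (hq : 1 < q) (hn : n ∣ q - 1)
    (h : n * (q - 1) ∣ q ^ d - 1) : n ∣ d := by
  have hgeom : (∑ i ∈ Finset.range d, q ^ i) * (q - 1) = q ^ d - 1 := by
    rw [Nat.geomSum_eq hq, Nat.div_mul_cancel (Nat.sub_one_dvd_pow_sub_one q d)]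
  have hsum : n ∣ ∑ i ∈ Finset.range d, q ^ i :=
    Nat.dvd_of_mul_dvd_mul_right (by omega) (hgeom ▸ h)
  have hq1 : (q : ZMod n) = 1 := by
    rw [← Nat.cast_one, ZMod.natCast_eq_natCast_iff]
    exact ((Nat.modEq_iff_dvd' hq.le).2 hn).symm
  rw [← ZMod.natCast_eq_zero_iff] at hsum ⊢
  simpa [hq1] using hsum

namespace FiniteField

variable {F : Type*} [Field F] [Fintype F]

theorem natCast_ne_zero_of_dvd_card_sub_one {n : ℕ} (hn : n ∣ Fintype.card F - 1) :
    (n : F) ≠ 0 := by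
  obtain ⟨c, hc⟩ := hn
  have hcast : ((Fintype.card F - 1 : ℕ) : F) = -1 := by
    rw [Nat.cast_sub Fintype.card_pos, cast_card_eq_zero, Nat.cast_one, zero_sub]
  intro h0
  rw [hc, Nat.cast_mul, h0, zero_mul] at hcast
  exact zero_ne_one (neg_eq_zero.1 hcast.symm).symm

variable {K : Type*} [Field K] [Algebra F K]

theorem mem_range_algebraMap_of_pow_card_eq_self {x : K} (hx : x ^ Fintype.card F = x) :
    x ∈ (algebraMap F K).range := by
  have hsplits : (X ^ Fintype.card F - X : F[X]).Splits := by
    simpa using (isSplittingField_sub F F).splits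
  refine hsplits.mem_range_of_isRoot (X_pow_card_sub_X_ne_zero F Fintype.one_lt_card) ?_
  simp [hx]

theorem pow_card_pow_natDegree_minpoly {x : K} (hx : IsIntegral F x) :
    x ^ Fintype.card F ^ (minpoly F x).natDegree = x := by
  have : FiniteDimensional F F⟮x⟯ := adjoin.finiteDimensional hx
  have : Finite F⟮x⟯ := Module.finite_of_finite F
  let : Fintype F⟮x⟯ := Fintype.ofFinite _
  have hcard : Fintype.card F⟮x⟯ = Fintype.card F ^ (minpoly F x).natDegree := by
    rw [Module.card_eq_pow_finrank (K := F), adjoin.finrank hx]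
  have := congrArg (algebraMap F⟮x⟯ K) (pow_card (AdjoinSimple.gen F x))
  rwa [map_pow, AdjoinSimple.algebraMap_gen, hcard] at this

theorem irreducible_X_pow_sub_C_of_isPrimitiveRoot {n : ℕ} (hn : 0 < n)
    (hdvd : n ∣ Fintype.card F - 1) {ζ : K} (hζ : IsPrimitiveRoot ζ (n * (Fintype.card F - 1)))
    {a : F} (ha : algebraMap F K a = ζ ^ n) : Irreducible (X ^ n - C a) := by
  have hroot : aeval ζ (X ^ n - C a) = 0 := by simp [ha]
  have hint : IsIntegral F ζ := ⟨_, monic_X_pow_sub_C a hn.ne', hroot⟩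
  have hpow : ζ ^ (Fintype.card F ^ (minpoly F ζ).natDegree - 1) = 1 := by
    have hζ0 : ζ ≠ 0 := hζ.ne_zero (Nat.mul_pos hn (Nat.sub_pos_of_lt Fintype.one_lt_card)).ne'
    have := pow_card_pow_natDegree_minpoly hint
    rwa [← Nat.sub_add_cancel (Nat.one_le_pow _ _ Fintype.card_pos), pow_succ,
      mul_eq_right₀ hζ0] at this
  have hdeg : n ∣ (minpoly F ζ).natDegree :=
    Nat.dvd_of_mul_sub_one_dvd_pow_sub_one Fintype.one_lt_card hdvd (hζ.dvd_of_pow_eq_one _ hpow)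
  rw [eq_of_monic_of_dvd_of_natDegree_le (minpoly.monic hint) (monic_X_pow_sub_C a hn.ne')
    (minpoly.dvd F ζ hroot)
    (natDegree_X_pow_sub_C.trans_le (Nat.le_of_dvd (minpoly.natDegree_pos hint) hdeg))]
  exact minpoly.irreducible hint

end FiniteField

theorem exists_irreducible_binomial_of_dvd_sub_one_general
    (q n : ℕ) (hn : 0 < n) (hdvd : n ∣ q - 1)
    (F : Type*) [Field F] [Fintype F] (hF : Fintype.card F = q) :
    ∃ a : F, Irreducible (X ^ n - C a : F[X]) := by
  subst hF
  set m := n * (Fintype.card F - 1)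
  have : NeZero (m : F) := ⟨by
    rw [Nat.cast_mul]
    exact mul_ne_zero (FiniteField.natCast_ne_zero_of_dvd_card_sub_one hdvd)
      (FiniteField.natCast_ne_zero_of_dvd_card_sub_one dvd_rfl)⟩
  have : NeZero (m : AlgebraicClosure F) := NeZero.nat_of_injective (algebraMap F _).injective
  obtain ⟨ζ, hζ⟩ := HasEnoughRootsOfUnity.exists_primitiveRoot (AlgebraicClosure F) m
  obtain ⟨a, ha⟩ : ζ ^ n ∈ (algebraMap F (AlgebraicClosure F)).range := by
    refine FiniteField.mem_range_algebraMap_of_pow_card_eq_self ?_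
    rw [← Nat.sub_add_cancel Fintype.card_pos, pow_succ, ← pow_mul, hζ.pow_eq_one, one_mul]
  exact ⟨a, FiniteField.irreducible_X_pow_sub_C_of_isPrimitiveRoot hn hdvd hζ ha⟩

/-- If `n ∣ q - 1`, there exists `a` in the finite field `F` with `q` elements such that
`X^n - a` is irreducible over `F`. -/
theorem exists_irreducible_binomial_of_dvd_sub_one
    (q n : ℕ) (hq : IsPrimePow q) (hn : 0 < n) (hdvd : n ∣ q - 1)
    (F : Type*) [Field F] [Fintype F] (hF : Fintype.card F = q) :
    ∃ a : F, Irreducible (X ^ n - C a : F[X]) :=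
  exists_irreducible_binomial_of_dvd_sub_one_general q n hn hdvd F hF
end

section
/- Let q be a prime power, n a positive integer with n | q - 1, F a finite field with q elements, a ∈ F such that X^n - a is irreducible over F, K = F[X]/(X^n - a), α ∈ K the image of X, b ∈ F, and h = a^((q-1)/n) ∈ F. Then for every natural number i, (α + b)^(q^i) = h^i · α + b in K (where elements of F are identified with their images in K). -/
/-!
Since `α ^ n = a` and `n ∣ q - 1`, one has `α ^ q = (α ^ n) ^ ((q - 1) / n) * α = h * α`.
The map `x ↦ x ^ q` is the Frobenius endomorphism of the `F`-algebra `K`: it is additive and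
fixes `F`, so it sends `c * α + b` to `c * h * α + b`, and iterating it `i` times from `α + b`
gives `h ^ i * α + b`.
-/

open Polynomial

namespace FiniteField

variable {F R : Type*} [Field F] [Fintype F] [CommRing R] [Algebra F R]

theorem pow_card_eq_of_pow_eq_algebraMap {n : ℕ} (hn : n ∣ Fintype.card F - 1) {α : R} {a : F}
    (hα : α ^ n = algebraMap F R a) :
    α ^ Fintype.card F = algebraMap F R (a ^ ((Fintype.card F - 1) / n)) * α :=
  calc α ^ Fintype.card F = (α ^ n) ^ ((Fintype.card F - 1) / n) * α := by
        rw [← pow_mul, Nat.mul_div_cancel' hn, ← pow_succ, Nat.sub_add_cancel Fintype.card_pos]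
    _ = algebraMap F R (a ^ ((Fintype.card F - 1) / n)) * α := by rw [hα, map_pow]

theorem add_algebraMap_pow_card_pow {α : R} {h : F}
    (hα : α ^ Fintype.card F = algebraMap F R h * α) (b : F) (i : ℕ) :
    (α + algebraMap F R b) ^ Fintype.card F ^ i = algebraMap F R (h ^ i) * α + algebraMap F R b := by
  induction i with
  | zero => simp
  | succ i ih =>
    have frobenius_apply (x : R) : x ^ Fintype.card F = frobeniusAlgHom F R x := rfl
    rw [pow_succ, pow_mul, ih, frobenius_apply, map_add, map_mul, AlgHom.commutes,
      AlgHom.commutes, ← frobenius_apply, hα, ← mul_assoc, ← map_mul, ← pow_succ]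

end FiniteField

theorem pow_q_pow_eq_frobenius_orbit_general
    (q n : ℕ) (hdvd : n ∣ q - 1)
    (F : Type*) [Field F] [Fintype F] (hF : Fintype.card F = q)
    (a : F)
    (b : F) (h : F) (hh : h = a ^ ((q - 1) / n)) (i : ℕ) :
    (AdjoinRoot.root (X ^ n - C a : F[X]) + AdjoinRoot.of (X ^ n - C a : F[X]) b) ^ q ^ i =
      AdjoinRoot.of (X ^ n - C a : F[X]) (h ^ i) * AdjoinRoot.root (X ^ n - C a : F[X]) +
        AdjoinRoot.of (X ^ n - C a : F[X]) b := by
  subst hF hh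
  exact FiniteField.add_algebraMap_pow_card_pow
    (FiniteField.pow_card_eq_of_pow_eq_algebraMap hdvd (root_X_pow_sub_C_pow n a)) b i

/-- In the Kummer extension `K = F[X]/(X^n - a)` with `α` the image of `X`,
for `h = a^((q-1)/n)` and any `b ∈ F`, one has `(α + b)^(q^i) = h^i * α + b`. -/
theorem pow_q_pow_eq_frobenius_orbit
    (q n : ℕ) (hq : IsPrimePow q) (hn : 0 < n) (hdvd : n ∣ q - 1)
    (F : Type*) [Field F] [Fintype F] (hF : Fintype.card F = q)
    (a : F) (hirr : Irreducible (X ^ n - C a : F[X]))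
    (b : F) (h : F) (hh : h = a ^ ((q - 1) / n)) (i : ℕ) :
    (AdjoinRoot.root (X ^ n - C a : F[X]) + AdjoinRoot.of (X ^ n - C a : F[X]) b) ^ q ^ i =
      AdjoinRoot.of (X ^ n - C a : F[X]) (h ^ i) * AdjoinRoot.root (X ^ n - C a : F[X]) +
        AdjoinRoot.of (X ^ n - C a : F[X]) b :=
  pow_q_pow_eq_frobenius_orbit_general q n hdvd F hF a b h hh i
end

section
/- Let q be a prime power, n a positive integer with n | q - 1, F a finite field with q elements, a ∈ F such that X^n - a is irreducible over F, K = F[X]/(X^n - a), α ∈ K the image of X, b ∈ F, h = a^((q-1)/n) ∈ F, and g = α + b. Then for every natural number e < q^n with base-q digits e_0, e_1, ..., e_{n-1} (so that e = e_0 + e_1 q + ⋯ + e_{n-1} q^{n-1} with 0 ≤ e_i ≤ q - 1), one has g^e = ∏_{i=0}^{n-1} (h^i · α + b)^{e_i} in K. -/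
/-!
Write `q = #F`. On any commutative `F`-algebra, `x ↦ x ^ q` is an `F`-algebra endomorphism
(the `q`-Frobenius). In `K = F[X]/(X^n - a)` it sends `α` to `α ^ q = (α ^ n) ^ ((q-1)/n) * α
= h * α`, hence `g ^ (q ^ i) = h ^ i * α + b`, and the claim is `g ^ e = ∏ (g ^ (q ^ i)) ^ e_i`.
-/

open Polynomial

namespace Nat

theorem ofDigits_eq_sum_range_getD (b : ℕ) {L : List ℕ} {m : ℕ} (hL : L.length ≤ m) :
    ofDigits b L = ∑ i ∈ Finset.range m, L.getD i 0 * b ^ i := by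
  induction L generalizing m with
  | nil => simp [ofDigits]
  | cons d L ih =>
    obtain ⟨m, rfl⟩ : ∃ k, m = k + 1 := Nat.exists_eq_succ_of_ne_zero (by simp at hL; omega)
    rw [ofDigits_cons, Finset.sum_range_succ', ih (by simpa using hL), Finset.mul_sum]
    simp only [List.getD_cons_succ, List.getD_cons_zero, pow_zero, mul_one, add_comm d]
    exact congrArg (· + d) (Finset.sum_congr rfl fun i _ => by ring)

theorem eq_sum_range_getD_digits {b n e : ℕ} (hb : 1 < b) (he : e < b ^ n) :
    e = ∑ i ∈ Finset.range n, (b.digits e).getD i 0 * b ^ i := by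
  conv_lhs => rw [← ofDigits_digits b e]
  exact ofDigits_eq_sum_range_getD b ((digits_length_le_iff hb e).mpr he)

end Nat

theorem pow_eq_prod_pow_pow_digits {M : Type*} [CommMonoid M] (x : M) {b n e : ℕ} (hb : 1 < b)
    (he : e < b ^ n) :
    x ^ e = ∏ i ∈ Finset.range n, (x ^ b ^ i) ^ (b.digits e).getD i 0 := by
  conv_lhs => rw [Nat.eq_sum_range_getD_digits hb he]
  rw [← Finset.prod_pow_eq_pow_sum]
  exact Finset.prod_congr rfl fun i _ => by rw [← pow_mul, mul_comm]

theorem pow_eq_pow_div_mul_of_pow_eq {M : Type*} [CommMonoid M] {α a : M} {n q : ℕ}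
    (hα : α ^ n = a) (hq : 0 < q) (hdvd : n ∣ q - 1) :
    α ^ q = a ^ ((q - 1) / n) * α := by
  rw [← hα, ← pow_mul, Nat.mul_div_cancel' hdvd, ← pow_succ, Nat.sub_add_cancel hq]

theorem add_algebraMap_pow_card_pow {F R : Type*} [Field F] [Fintype F] [CommRing R]
    [Algebra F R] {x : R} {c : F} (hx : x ^ Fintype.card F = algebraMap F R c * x) (b : F)
    (i : ℕ) :
    (x + algebraMap F R b) ^ Fintype.card F ^ i = algebraMap F R (c ^ i) * x + algebraMap F R b := by
  induction i with
  | zero => simp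
  | succ i ih =>
    have frob (y : R) : y ^ Fintype.card F = FiniteField.frobeniusAlgHom F R y := rfl
    rw [pow_succ, pow_mul, ih, frob, map_add, map_mul, AlgHom.commutes, AlgHom.commutes, ← frob,
      hx, pow_succ, map_mul]
    ring

theorem pow_eq_prod_digits_general
    (q n : ℕ) (hdvd : n ∣ q - 1)
    (F : Type*) [Field F] [Fintype F] (hF : Fintype.card F = q)
    (a : F)
    (b : F) (h : F) (hh : h = a ^ ((q - 1) / n))
    (e : ℕ) (he : e < q ^ n) :
    (AdjoinRoot.root (X ^ n - C a : F[X]) + AdjoinRoot.of (X ^ n - C a : F[X]) b) ^ e =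
      ∏ i ∈ Finset.range n,
        (AdjoinRoot.of (X ^ n - C a : F[X]) (h ^ i) * AdjoinRoot.root (X ^ n - C a : F[X]) +
          AdjoinRoot.of (X ^ n - C a : F[X]) b) ^ ((Nat.digits q e).getD i 0) := by
  subst hF hh
  set α := AdjoinRoot.root (X ^ n - C a : F[X])
  have hαq : α ^ Fintype.card F = AdjoinRoot.of _ (a ^ ((Fintype.card F - 1) / n)) * α := by
    rw [map_pow]
    exact pow_eq_pow_div_mul_of_pow_eq (root_X_pow_sub_C_pow n a) Fintype.card_pos hdvd
  rw [pow_eq_prod_pow_pow_digits _ Fintype.one_lt_card he]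
  exact Finset.prod_congr rfl fun i _ => congrArg (· ^ _) (add_algebraMap_pow_card_pow hαq b i)

/-- In the Kummer extension `K = F[X]/(X^n - a)`, with `g = α + b` and `h = a^((q-1)/n)`,
for `e < q^n` with base-`q` digits `e_i`, we have `g^e = ∏ i < n, (h^i * α + b)^(e_i)`. -/
theorem pow_eq_prod_digits
    (q n : ℕ) (hq : IsPrimePow q) (hn : 0 < n) (hdvd : n ∣ q - 1)
    (F : Type*) [Field F] [Fintype F] (hF : Fintype.card F = q)
    (a : F) (hirr : Irreducible (X ^ n - C a : F[X]))
    (b : F) (h : F) (hh : h = a ^ ((q - 1) / n))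
    (e : ℕ) (he : e < q ^ n) :
    (AdjoinRoot.root (X ^ n - C a : F[X]) + AdjoinRoot.of (X ^ n - C a : F[X]) b) ^ e =
      ∏ i ∈ Finset.range n,
        (AdjoinRoot.of (X ^ n - C a : F[X]) (h ^ i) * AdjoinRoot.root (X ^ n - C a : F[X]) +
          AdjoinRoot.of (X ^ n - C a : F[X]) b) ^ ((Nat.digits q e).getD i 0) :=
  pow_eq_prod_digits_general q n hdvd F hF a b h hh e he
end

section
/- There exists a natural number N such that for all n ≥ N, the binomial coefficient C(⌊2.32·n⌋, n) is greater than 4.883987^n (as real numbers). -/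
open Finset
private lemma term_step_up {a b k : ℕ} (hk : k < a) :
    (a + b).choose k * (a ^ k * b ^ (a + b - k)) ≤
      (a + b).choose (k + 1) * (a ^ (k + 1) * b ^ (a + b - (k + 1))) := by
  set n := a + b with hn
  have hkn : k + 1 ≤ n := by omega
  have he : n - k = (n - (k + 1)) + 1 := by omega
  set e := n - (k + 1) with hedef
  have key : (k + 1) * b ≤ (n - k) * a := by
    have h1 : k + 1 ≤ a := hk
    have h2 : b ≤ n - k := by omega
    calc (k + 1) * b ≤ a * (n - k) := Nat.mul_le_mul h1 h2
      _ = (n - k) * a := Nat.mul_comm _ _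
  refine Nat.le_of_mul_le_mul_left ?_ (Nat.succ_pos k)
  have expand : (k + 1) * (n.choose (k + 1) * (a ^ (k + 1) * b ^ e)) =
      (n.choose k * (n - k)) * (a ^ (k + 1) * b ^ e) := by
    rw [← Nat.choose_succ_right_eq]; ring
  rw [he, expand, pow_succ a k, pow_succ b e]
  calc (k + 1) * (n.choose k * (a ^ k * (b ^ e * b)))
      = (n.choose k * (a ^ k * b ^ e)) * ((k + 1) * b) := by ring
    _ ≤ (n.choose k * (a ^ k * b ^ e)) * ((n - k) * a) :=
        Nat.mul_le_mul_left _ key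
    _ = n.choose k * (n - k) * (a ^ k * a * b ^ e) := by ring

private lemma term_step_down {a b k : ℕ} (ha : a ≤ k) (hkn : k + 1 ≤ a + b) :
    (a + b).choose (k + 1) * (a ^ (k + 1) * b ^ (a + b - (k + 1))) ≤
      (a + b).choose k * (a ^ k * b ^ (a + b - k)) := by
  set n := a + b with hn
  have he : n - k = (n - (k + 1)) + 1 := by omega
  set e := n - (k + 1) with hedef
  have key : (n - k) * a ≤ (k + 1) * b := by
    have h1 : a ≤ k + 1 := by omega
    have h2 : n - k ≤ b := by omega
    calc (n - k) * a ≤ b * (k + 1) := Nat.mul_le_mul h2 h1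
      _ = (k + 1) * b := Nat.mul_comm _ _
  refine Nat.le_of_mul_le_mul_left ?_ (Nat.succ_pos k)
  have expand : (k + 1) * (n.choose (k + 1) * (a ^ (k + 1) * b ^ e)) =
      (n.choose k * (n - k)) * (a ^ (k + 1) * b ^ e) := by
    rw [← Nat.choose_succ_right_eq]; ring
  rw [he, expand, pow_succ a k, pow_succ b e]
  calc n.choose k * (n - k) * (a ^ k * a * b ^ e)
      = (n.choose k * (a ^ k * b ^ e)) * ((n - k) * a) := by ring
    _ ≤ (n.choose k * (a ^ k * b ^ e)) * ((k + 1) * b) :=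
        Nat.mul_le_mul_left _ key
    _ = (k + 1) * (n.choose k * (a ^ k * (b ^ e * b))) := by ring

private lemma term_le_mode (a b k : ℕ) :
    (a + b).choose k * (a ^ k * b ^ (a + b - k)) ≤
      (a + b).choose a * (a ^ a * b ^ b) := by
  have hb : a + b - a = b := by omega
  rcases le_or_gt k a with hka | hka
  · obtain ⟨d, hd⟩ := Nat.le.dest hka
    clear hka
    induction d generalizing k with
    | zero => simp only [Nat.add_zero] at hd; subst hd; rw [hb]
    | succ d ih =>
      have hk : k < a := by omega
      calc (a + b).choose k * (a ^ k * b ^ (a + b - k))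
          ≤ (a + b).choose (k + 1) * (a ^ (k + 1) * b ^ (a + b - (k + 1))) :=
            term_step_up hk
        _ ≤ (a + b).choose a * (a ^ a * b ^ b) := ih (k + 1) (by omega)
  · rcases le_or_gt k (a + b) with hkn | hkn
    · obtain ⟨d, hd⟩ : ∃ d, k = a + d := ⟨k - a, by omega⟩
      subst hd
      clear hka
      induction d with
      | zero => simp only [Nat.add_zero]; rw [hb]
      | succ d ih =>
        calc (a + b).choose (a + (d+1)) * (a ^ (a + (d+1)) * b ^ (a + b - (a + (d+1))))
            = (a + b).choose ((a + d) + 1) * (a ^ ((a + d) + 1) * b ^ (a + b - ((a + d) + 1))) := by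
              ring_nf
          _ ≤ (a + b).choose (a + d) * (a ^ (a + d) * b ^ (a + b - (a + d))) :=
              term_step_down (by omega) (by omega)
          _ ≤ (a + b).choose a * (a ^ a * b ^ b) := ih (by omega)
    · have : (a + b).choose k = 0 := Nat.choose_eq_zero_of_lt hkn
      simp [this]

private lemma entropy_bound (a b : ℕ) :
    (a + b) ^ (a + b) ≤ (a + b + 1) * ((a + b).choose a * (a ^ a * b ^ b)) := by
  have h := add_pow a b (a + b)
  rw [h]
  calc ∑ k ∈ range (a + b + 1), a ^ k * b ^ (a + b - k) * (a + b).choose k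
      ≤ ∑ _k ∈ range (a + b + 1), (a + b).choose a * (a ^ a * b ^ b) := by
        refine Finset.sum_le_sum fun k _ => ?_
        calc a ^ k * b ^ (a + b - k) * (a + b).choose k
            = (a + b).choose k * (a ^ k * b ^ (a + b - k)) := by ring
          _ ≤ (a + b).choose a * (a ^ a * b ^ b) := term_le_mode a b k
    _ = (a + b + 1) * ((a + b).choose a * (a ^ a * b ^ b)) := by
        rw [Finset.sum_const, Finset.card_range, smul_eq_mul]

private lemma pow_self_le_pow_self {k l : ℕ} (h : k ≤ l) : k ^ k ≤ l ^ l := by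
  rcases Nat.eq_zero_or_pos l with hl | hl
  · subst hl; interval_cases k; simp
  · calc k ^ k ≤ l ^ k := Nat.pow_le_pow_left h k
      _ ≤ l ^ l := Nat.pow_le_pow_right hl h

/-- For all sufficiently large `n`, the central-type binomial coefficient
`C(⌊2.32 n⌋, n)` exceeds `4.883987 ^ n`. -/
theorem choose_floor_232_lt :
    ∃ N : ℕ, ∀ n ≥ N, (4.883987 : ℝ) ^ n < ((58 * n / 25).choose n : ℝ) := by
  obtain ⟨B, hBdef⟩ : ∃ x : ℝ, x = 4.883987 := ⟨_, rfl⟩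
  rw [show (4.883987 : ℝ) = B from hBdef.symm]
  have hBpos : (0 : ℝ) < B := by rw [hBdef]; norm_num
  obtain ⟨ρ, hρdef⟩ : ∃ x : ℝ, x = (B ^ 25 * 25 ^ 25 * 33 ^ 33) / 58 ^ 58 := ⟨_, rfl⟩
  have hρpos : 0 < ρ := by rw [hρdef]; positivity
  have hkey : B ^ 25 * 25 ^ 25 * 33 ^ 33 < (58 : ℝ) ^ 58 := by
    rw [hBdef]; norm_num
  have hρlt : ρ < 1 := by
    rw [hρdef, div_lt_one (by positivity)]; exact hkey
  have hnorm : ‖ρ‖ < 1 := by rw [Real.norm_eq_abs, abs_of_pos hρpos]; exact hρlt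
  have htend := (summable_pow_mul_geometric_of_norm_lt_one 49 hnorm).tendsto_atTop_zero
  obtain ⟨C0, hC0def⟩ : ∃ x : ℝ, x = 4 ^ 25 * 3 ^ 24 * 58 ^ 24 := ⟨_, rfl⟩
  have hC0pos : (0 : ℝ) < C0 := by rw [hC0def]; positivity
  have hev : ∀ᶠ n : ℕ in Filter.atTop, (n : ℝ) ^ 49 * ρ ^ n < 1 / C0 :=
    htend.eventually_lt_const (one_div_pos.mpr hC0pos)

  obtain ⟨N, hN⟩ := Filter.eventually_atTop.1 (hev.and (Filter.eventually_ge_atTop 3))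
  refine ⟨N, fun n hn => ?_⟩
  obtain ⟨key, h3⟩ := hN n hn
  set m := 58 * n / 25 with hmdef
  have hmr : 25 * m + 58 * n % 25 = 58 * n := Nat.div_add_mod (58 * n) 25
  set r := 58 * n % 25 with hrdef
  have hr : r < 25 := Nat.mod_lt _ (by norm_num)
  have hm2n : 2 * n ≤ m := by omega
  set b := m - n with hbdef
  have hb : m = n + b := by omega
  have hbn : n ≤ b := by omega
  have h25b : 25 * b + r = 33 * n := by omega
  have hm4n : m + 1 ≤ 4 * n := by omega
  have hn0 : (0 : ℝ) < n := by exact_mod_cast (by omega : 0 < n)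
  have hb0 : (0 : ℝ) < b := by exact_mod_cast (by omega : 0 < b)
  have hm0 : (0 : ℝ) < m := by exact_mod_cast (by omega : 0 < m)
  -- entropy bound, cast to ℝ
  have hent : ((m : ℝ)) ^ m ≤
      ((m : ℝ) + 1) * ((m.choose n : ℝ) * ((n : ℝ) ^ n * (b : ℝ) ^ b)) := by
    have h := entropy_bound n b
    rw [← hb] at h
    exact_mod_cast h
  -- the nat quantity w = 58n - 24
  set w : ℕ := 58 * n - 24 with hwdef
  have hw0 : (0 : ℝ) < w := by exact_mod_cast (by omega : 0 < w)
  -- exponential bound : (w + 24)^w ≤ 3^24 * w^w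
  have hexp : ((w : ℝ) + 24) ^ w ≤ 3 ^ 24 * (w : ℝ) ^ w := by
    have h1 : (w : ℝ) + 24 ≤ (w : ℝ) * Real.exp (24 / (w : ℝ)) := by
      have h0 := Real.add_one_le_exp (24 / (w : ℝ))
      have h2 := mul_le_mul_of_nonneg_left h0 (le_of_lt hw0)
      calc (w : ℝ) + 24 = (w : ℝ) * (24 / (w : ℝ) + 1) := by field_simp; ring
        _ ≤ (w : ℝ) * Real.exp (24 / (w : ℝ)) := h2
    calc ((w : ℝ) + 24) ^ w ≤ ((w : ℝ) * Real.exp (24 / (w : ℝ))) ^ w :=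
          pow_le_pow_left₀ (by positivity) h1 w
      _ = (w : ℝ) ^ w * Real.exp ((w : ℝ) * (24 / (w : ℝ))) := by
          rw [mul_pow, ← Real.exp_nat_mul]
      _ = (w : ℝ) ^ w * Real.exp 24 := by
          rw [mul_div_cancel₀ _ (ne_of_gt hw0)]
      _ ≤ (w : ℝ) ^ w * 3 ^ 24 := by
          refine mul_le_mul_of_nonneg_left ?_ (by positivity)
          calc Real.exp 24 = Real.exp 1 ^ 24 := by
                rw [← Real.exp_nat_mul]; norm_num
            _ ≤ 3 ^ 24 := by
                refine pow_le_pow_left₀ (Real.exp_pos 1).le ?_ 24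
                exact Real.exp_one_lt_d9.le.trans (by norm_num)
      _ = 3 ^ 24 * (w : ℝ) ^ w := mul_comm _ _
  have hwn : (w : ℝ) + 24 = 58 * (n : ℝ) := by
    have h : w + 24 = 58 * n := by omega
    exact_mod_cast h
  -- bound (58n)^(58n) ≤ 3^24 * (58n)^24 * w^w
  have hw58 : (58 * (n : ℝ)) ^ (58 * n) ≤ 3 ^ 24 * (58 * (n : ℝ)) ^ 24 * (w : ℝ) ^ w := by
    calc (58 * (n : ℝ)) ^ (58 * n)
        = ((w : ℝ) + 24) ^ (w + 24) := by rw [hwn, (by omega : 58 * n = w + 24)]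
      _ = ((w : ℝ) + 24) ^ w * ((w : ℝ) + 24) ^ 24 := pow_add _ _ _
      _ = ((w : ℝ) + 24) ^ w * (58 * (n : ℝ)) ^ 24 := by rw [hwn]
      _ ≤ (3 ^ 24 * (w : ℝ) ^ w) * (58 * (n : ℝ)) ^ 24 :=
          mul_le_mul_of_nonneg_right hexp (by positivity)
      _ = 3 ^ 24 * (58 * (n : ℝ)) ^ 24 * (w : ℝ) ^ w := by ring
  -- the core asymptotic inequality
  have hS3' : (B ^ 25 * 25 ^ 25 * 33 ^ 33) ^ n * (C0 * (n : ℝ) ^ 49) < ((58 : ℝ) ^ 58) ^ n := by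
    have hρmul : ρ * 58 ^ 58 = B ^ 25 * 25 ^ 25 * 33 ^ 33 := by
      rw [hρdef]; field_simp
    calc (B ^ 25 * 25 ^ 25 * 33 ^ 33) ^ n * (C0 * (n : ℝ) ^ 49)
        = (ρ * 58 ^ 58) ^ n * (C0 * (n : ℝ) ^ 49) := by rw [hρmul]
      _ = ((n : ℝ) ^ 49 * ρ ^ n) * C0 * ((58 : ℝ) ^ 58) ^ n := by
          rw [mul_pow]; ring
      _ < (1 / C0) * C0 * ((58 : ℝ) ^ 58) ^ n := by
          exact mul_lt_mul_of_pos_right (mul_lt_mul_of_pos_right key hC0pos) (by positivity)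
      _ = ((58 : ℝ) ^ 58) ^ n := by
          rw [one_div, inv_mul_cancel₀ hC0pos.ne', one_mul]
  have hm4R : ((m : ℝ) + 1) ^ 25 ≤ (4 * (n : ℝ)) ^ 25 := by
    refine pow_le_pow_left₀ (by positivity) ?_ 25
    have : (m : ℝ) + 1 ≤ ((4 * n : ℕ) : ℝ) := by exact_mod_cast hm4n
    simpa using this
  -- S2
  have hS2 : B ^ (25 * n) * ((m : ℝ) + 1) ^ 25 * (25 * (n : ℝ)) ^ (25 * n) *
      (33 * (n : ℝ)) ^ (33 * n) * (3 ^ 24 * (58 * (n : ℝ)) ^ 24) < (58 * (n : ℝ)) ^ (58 * n) := by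
    calc B ^ (25 * n) * ((m : ℝ) + 1) ^ 25 * (25 * (n : ℝ)) ^ (25 * n) *
          (33 * (n : ℝ)) ^ (33 * n) * (3 ^ 24 * (58 * (n : ℝ)) ^ 24)
        ≤ B ^ (25 * n) * (4 * (n : ℝ)) ^ 25 * (25 * (n : ℝ)) ^ (25 * n) *
          (33 * (n : ℝ)) ^ (33 * n) * (3 ^ 24 * (58 * (n : ℝ)) ^ 24) := by
          gcongr
      _ = (B ^ 25 * 25 ^ 25 * 33 ^ 33) ^ n * (C0 * (n : ℝ) ^ 49) * (n : ℝ) ^ (58 * n) := by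
          rw [hC0def]
          obtain ⟨p, hp⟩ : ∃ x : ℝ, x = 25 := ⟨_, rfl⟩
          obtain ⟨q, hq⟩ : ∃ x : ℝ, x = 33 := ⟨_, rfl⟩
          obtain ⟨s, hs⟩ : ∃ x : ℝ, x = 58 := ⟨_, rfl⟩
          obtain ⟨f, hf⟩ : ∃ x : ℝ, x = 4 := ⟨_, rfl⟩
          obtain ⟨t, ht⟩ : ∃ x : ℝ, x = 3 := ⟨_, rfl⟩
          rw [show (25 : ℝ) = p from hp.symm, show (33 : ℝ) = q from hq.symm,
            show (58 : ℝ) = s from hs.symm, show (4 : ℝ) = f from hf.symm,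
            show (3 : ℝ) = t from ht.symm]
          ring
      _ < ((58 : ℝ) ^ 58) ^ n * (n : ℝ) ^ (58 * n) :=
          mul_lt_mul_of_pos_right hS3' (by positivity)
      _ = (58 * (n : ℝ)) ^ (58 * n) := by
          obtain ⟨s, hs⟩ : ∃ x : ℝ, x = 58 := ⟨_, rfl⟩
          rw [show (58 : ℝ) = s from hs.symm]
          ring
  -- S1
  have hS1 : B ^ (25 * n) * ((m : ℝ) + 1) ^ 25 * (25 * (n : ℝ)) ^ (25 * n) *
      (33 * (n : ℝ)) ^ (33 * n) < (w : ℝ) ^ w := by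
    refine lt_of_mul_lt_mul_right ?_ (by positivity : (0:ℝ) ≤ 3 ^ 24 * (58 * (n : ℝ)) ^ 24)
    calc B ^ (25 * n) * ((m : ℝ) + 1) ^ 25 * (25 * (n : ℝ)) ^ (25 * n) *
          (33 * (n : ℝ)) ^ (33 * n) * (3 ^ 24 * (58 * (n : ℝ)) ^ 24)
        < (58 * (n : ℝ)) ^ (58 * n) := hS2
      _ ≤ 3 ^ 24 * (58 * (n : ℝ)) ^ 24 * (w : ℝ) ^ w := hw58
      _ = (w : ℝ) ^ w * (3 ^ 24 * (58 * (n : ℝ)) ^ 24) := by ring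
  -- nat monotonicity facts, cast to ℝ
  have hvR : (25 * (b : ℝ)) ^ (25 * b) ≤ (33 * (n : ℝ)) ^ (33 * n) := by
    have h := pow_self_le_pow_self (show 25 * b ≤ 33 * n by omega)
    exact_mod_cast h
  have huR : (w : ℝ) ^ w ≤ (25 * (m : ℝ)) ^ (25 * m) := by
    have h := pow_self_le_pow_self (show w ≤ 25 * m by omega)
    exact_mod_cast h
  -- main multiplicative inequality
  have hmain : B ^ n * ((m : ℝ) + 1) * (n : ℝ) ^ n * (b : ℝ) ^ b < (m : ℝ) ^ m := by
    refine lt_of_pow_lt_pow_left₀ 25 (by positivity) ?_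
    refine lt_of_mul_lt_mul_right ?_ (by positivity : (0:ℝ) ≤ (25 : ℝ) ^ (25 * m))
    have hm25 : 25 * m = 25 * n + 25 * b := by omega
    calc (B ^ n * ((m : ℝ) + 1) * (n : ℝ) ^ n * (b : ℝ) ^ b) ^ 25 * (25 : ℝ) ^ (25 * m)
        = B ^ (25 * n) * ((m : ℝ) + 1) ^ 25 * (25 * (n : ℝ)) ^ (25 * n) *
          (25 * (b : ℝ)) ^ (25 * b) := by rw [hm25]; ring
      _ ≤ B ^ (25 * n) * ((m : ℝ) + 1) ^ 25 * (25 * (n : ℝ)) ^ (25 * n) *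
          (33 * (n : ℝ)) ^ (33 * n) := by gcongr
      _ < (w : ℝ) ^ w := hS1
      _ ≤ (25 * (m : ℝ)) ^ (25 * m) := huR
      _ = ((m : ℝ) ^ m) ^ 25 * (25 : ℝ) ^ (25 * m) := by ring
  -- conclude
  have hP : (0 : ℝ) < ((m : ℝ) + 1) * ((n : ℝ) ^ n * (b : ℝ) ^ b) :=
    mul_pos (by linarith) (mul_pos (pow_pos hn0 n) (pow_pos hb0 b))
  have hchain : B ^ n * (((m : ℝ) + 1) * ((n : ℝ) ^ n * (b : ℝ) ^ b)) <
      (m.choose n : ℝ) * (((m : ℝ) + 1) * ((n : ℝ) ^ n * (b : ℝ) ^ b)) := by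
    calc B ^ n * (((m : ℝ) + 1) * ((n : ℝ) ^ n * (b : ℝ) ^ b))
        = B ^ n * ((m : ℝ) + 1) * (n : ℝ) ^ n * (b : ℝ) ^ b := by ring
      _ < (m : ℝ) ^ m := hmain
      _ ≤ ((m : ℝ) + 1) * ((m.choose n : ℝ) * ((n : ℝ) ^ n * (b : ℝ) ^ b)) := hent
      _ = (m.choose n : ℝ) * (((m : ℝ) + 1) * ((n : ℝ) ^ n * (b : ℝ) ^ b)) := by ring
  exact lt_of_mul_lt_mul_right hchain (le_of_lt hP)
end

section
/- There exists a natural number N such that for all n ≥ N, the sum Σ_{v = ⌈0.5657·n⌉}^{n} C(n, v) · C(⌊1.32·n⌋, n - v - 1) is less than 4.883799^n (as real numbers). -/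
/-!
Bound each summand by weighting: from `x ^ k * C(m, k) ≤ (x + 1) ^ m` with `x = 1.3` for `C(n, v)`
and `x = 0.49` for `C(⌊1.32 n⌋, n - v - 1)`, every summand with `v ≥ v₀ := ⌈0.5657 n⌉` is at most
`2.3 ^ n * 1.49 ^ ⌊1.32 n⌋ / (1.3 ^ v₀ * 0.49 ^ (n - v₀ - 1))`, and using only `v₀ ≥ 0.56 n` this is
at most `4.7 ^ n`. The `n + 1` summands then give `(n + 1) * 4.7 ^ n`, which is eventually below
`4.883799 ^ n`.
-/

open Finset Filter Topology

theorem pow_mul_choose_le_add_one_pow {R : Type*} [CommSemiring R] [PartialOrder R]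
    [IsOrderedRing R] {x : R} (hx : 0 ≤ x) (m k : ℕ) :
    x ^ k * m.choose k ≤ (x + 1) ^ m := by
  rcases lt_or_ge m k with hmk | hkm
  · simp only [Nat.choose_eq_zero_of_lt hmk, Nat.cast_zero, mul_zero]
    exact pow_nonneg (add_nonneg hx zero_le_one) m
  · rw [add_pow]
    simp only [one_pow, mul_one]
    exact single_le_sum (f := fun i => x ^ i * (m.choose i : R)) (fun i _ => by positivity)
      (mem_range.2 (Nat.lt_succ_of_le hkm))

section WeightedSum

variable {x y : ℝ} {n m v₀ : ℕ}

theorem pow_mul_pow_mul_choose_mul_choose_le (hx : 1 ≤ x) (hy₀ : 0 ≤ y) (hy₁ : y ≤ 1)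
    {v : ℕ} (hv : v₀ ≤ v) :
    x ^ v₀ * y ^ (n - v₀ - 1) * (n.choose v * m.choose (n - v - 1)) ≤
      (x + 1) ^ n * (y + 1) ^ m := by
  have hxv : x ^ v₀ ≤ x ^ v := pow_le_pow_right₀ hx hv
  have hyj : y ^ (n - v₀ - 1) ≤ y ^ (n - v - 1) := pow_le_pow_of_le_one hy₀ hy₁ (by omega)
  calc x ^ v₀ * y ^ (n - v₀ - 1) * (n.choose v * m.choose (n - v - 1))
      = (x ^ v₀ * n.choose v) * (y ^ (n - v₀ - 1) * m.choose (n - v - 1)) := by ring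
    _ ≤ (x ^ v * n.choose v) * (y ^ (n - v - 1) * m.choose (n - v - 1)) := by gcongr
    _ ≤ (x + 1) ^ n * (y + 1) ^ m := by
        gcongr
        · exact pow_mul_choose_le_add_one_pow (by linarith) _ _
        · exact pow_mul_choose_le_add_one_pow hy₀ _ _

theorem pow_mul_pow_mul_sum_choose_mul_choose_le (hx : 1 ≤ x) (hy₀ : 0 ≤ y) (hy₁ : y ≤ 1) :
    x ^ v₀ * y ^ (n - v₀ - 1) * ∑ v ∈ Icc v₀ n, (n.choose v * m.choose (n - v - 1) : ℝ) ≤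
      (n + 1) * ((x + 1) ^ n * (y + 1) ^ m) := by
  have hcard : ((Icc v₀ n).card : ℝ) ≤ n + 1 := by
    rw [Nat.card_Icc]
    exact_mod_cast (by omega : n + 1 - v₀ ≤ n + 1)
  rw [mul_sum]
  calc ∑ v ∈ Icc v₀ n, x ^ v₀ * y ^ (n - v₀ - 1) * (n.choose v * m.choose (n - v - 1) : ℝ)
      ≤ (Icc v₀ n).card * ((x + 1) ^ n * (y + 1) ^ m) := by
        rw [← nsmul_eq_mul]
        exact sum_le_card_nsmul _ _ _ fun v hv =>
          pow_mul_pow_mul_choose_mul_choose_le hx hy₀ hy₁ (mem_Icc.1 hv).1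
    _ ≤ (n + 1) * ((x + 1) ^ n * (y + 1) ^ m) := by gcongr

end WeightedSum

theorem pow_mul_pow_le_of_pow_mul_pow_le {a b c d K : ℝ} {k p r s n m i j : ℕ} (ha : 0 ≤ a)
    (hb : 1 ≤ b) (hc : 1 ≤ c) (hd₀ : 0 ≤ d) (hd₁ : d ≤ 1) (hK : 0 ≤ K) (hk : k ≠ 0)
    (hm : k * m ≤ p * n) (hi : r * n ≤ k * i) (hj : k * j ≤ s * n)
    (hbase : a ^ k * b ^ p ≤ K ^ k * (c ^ r * d ^ s)) :
    a ^ n * b ^ m ≤ K ^ n * (c ^ i * d ^ j) := by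
  refine le_of_pow_le_pow_left₀ hk (by positivity) ?_
  calc (a ^ n * b ^ m) ^ k
      = a ^ (k * n) * b ^ (k * m) := by ring
    _ ≤ a ^ (k * n) * b ^ (p * n) := by gcongr
    _ = (a ^ k * b ^ p) ^ n := by ring
    _ ≤ (K ^ k * (c ^ r * d ^ s)) ^ n := by gcongr
    _ = K ^ (k * n) * (c ^ (r * n) * d ^ (s * n)) := by ring
    _ ≤ K ^ (k * n) * (c ^ (k * i) * d ^ (k * j)) := by
        gcongr K ^ (k * n) * (c ^ ?_ * ?_)
        · exact pow_le_pow_of_le_one hd₀ hd₁ hj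
    _ = (K ^ n * (c ^ i * d ^ j)) ^ k := by ring

theorem eventually_succ_mul_pow_lt_pow {a b : ℝ} (ha : 0 ≤ a) (hab : a < b) :
    ∀ᶠ n : ℕ in atTop, (n + 1) * a ^ n < b ^ n := by
  have hb : 0 < b := ha.trans_lt hab
  have hr₀ : 0 ≤ a / b := div_nonneg ha hb.le
  have hr₁ : a / b < 1 := (div_lt_one hb).2 hab
  have hlim : Tendsto (fun n : ℕ => n * (a / b) ^ n + (a / b) ^ n) atTop (𝓝 0) := by
    simpa using (tendsto_self_mul_const_pow_of_lt_one hr₀ hr₁).add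
      (tendsto_pow_atTop_nhds_zero_of_lt_one hr₀ hr₁)
  filter_upwards [hlim.eventually_lt_const one_pos] with n hn
  have hbn : 0 < b ^ n := pow_pos hb n
  rw [div_pow, ← add_one_mul, mul_div_assoc', div_lt_one hbn] at hn
  exact hn

/-- For all sufficiently large `n`,
`∑_{v = ⌈0.5657 n⌉}^{n} C(n, v) * C(⌊1.32 n⌋, n - v - 1) < 4.883799 ^ n`. -/
theorem sum_choose_lt :
    ∃ N : ℕ, ∀ n ≥ N,
      ((∑ v ∈ Finset.Icc ((5657 * n + 9999) / 10000) n,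
        n.choose v * (33 * n / 25).choose (n - v - 1) : ℕ) : ℝ) < (4.883799 : ℝ) ^ n := by
  obtain ⟨N, hN⟩ := eventually_atTop.1 <|
    eventually_succ_mul_pow_lt_pow (a := 47 / 10) (b := 4.883799) (by norm_num) (by norm_num)
  refine ⟨N, fun n hn => ?_⟩
  set v₀ := (5657 * n + 9999) / 10000
  set m := 33 * n / 25
  -- `m ≤ 33 n / 25`, `v₀ ≥ 14 n / 25` and `n - v₀ - 1 ≤ 11 n / 25`
  have hexp : (23 / 10 : ℝ) ^ n * (149 / 100) ^ m ≤
      (47 / 10) ^ n * ((13 / 10) ^ v₀ * (49 / 100) ^ (n - v₀ - 1)) :=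
    pow_mul_pow_le_of_pow_mul_pow_le (k := 25) (p := 33) (r := 14) (s := 11) (by norm_num)
      (by norm_num) (by norm_num) (by norm_num) (by norm_num) (by norm_num) (by norm_num)
      (by omega) (by omega) (by omega) (by norm_num)
  have hW : 0 < (13 / 10 : ℝ) ^ v₀ * (49 / 100) ^ (n - v₀ - 1) := by positivity
  push_cast
  refine lt_of_le_of_lt (le_of_mul_le_mul_left ?_ hW) (hN n hn)
  calc (13 / 10 : ℝ) ^ v₀ * (49 / 100) ^ (n - v₀ - 1) *
        ∑ v ∈ Icc v₀ n, (n.choose v * m.choose (n - v - 1) : ℝ)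
      ≤ (n + 1) * ((13 / 10 + 1) ^ n * (49 / 100 + 1) ^ m) :=
        pow_mul_pow_mul_sum_choose_mul_choose_le (by norm_num) (by norm_num) (by norm_num)
    _ = (n + 1) * ((23 / 10) ^ n * (149 / 100) ^ m) := by norm_num
    _ ≤ (n + 1) * ((47 / 10) ^ n * ((13 / 10) ^ v₀ * (49 / 100) ^ (n - v₀ - 1))) := by gcongr
    _ = (13 / 10 : ℝ) ^ v₀ * (49 / 100) ^ (n - v₀ - 1) * ((n + 1) * (47 / 10) ^ n) := by ring
end

section
/- Let q be a prime power, n ≥ 2 an integer with n | q - 1, F a finite field with q elements, a ∈ F such that X^n - a is irreducible over F, b ∈ F nonzero, and h = a^((q-1)/n). For 0 ≤ i ≤ n - 1 set β_i = -b·h^{-i} ∈ F. Then: (1) the elements β_0, ..., β_{n-1} are pairwise distinct; (2) β_i^n ≠ a for every i; and (3) if e_0, ..., e_{n-1} are natural numbers and f, t ∈ F[X] satisfy f + (X^n - a)·t = ∏_{i=0}^{n-1} (h^i X + b)^{e_i}, then for every index i with e_i ≥ 1 one has t(β_i) = -f(β_i)/(β_i^n - a). -/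
open Polynomial

/-! The element `h = a^((q-1)/n)` has multiplicative order exactly `n`: if its order were a
proper divisor `n / m`, then `a^((q-1)/m) = 1`, so `a = c^m` for some `c` in the cyclic group
`Fˣ`, and `X^(n/m) - c` would be a proper factor of `X^n - a`. Hence `1, h, …, h^(n-1)` are
distinct, which gives (1). An irreducible polynomial of degree `n ≥ 2` has no root, which
gives (2). Finally `β i` is the root of the factor `h^i X + b`, so evaluating the identity at
`β i` kills the right-hand side and leaves `f(β i) + (β i^n - a) t(β i) = 0`. -/

theorem IsCyclic.exists_pow_eq_of_pow_card_div_eq_one {G : Type*} [CommGroup G] [IsCyclic G]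
    [Finite G] {m : ℕ} (hm : m ∣ Nat.card G) {x : G} (hx : x ^ (Nat.card G / m) = 1) :
    ∃ y, y ^ m = x := by
  have hle : (powMonoidHom m : G →* G).range ≤ (powMonoidHom (Nat.card G / m)).ker := by
    rintro _ ⟨y, rfl⟩
    simp only [MonoidHom.mem_ker, powMonoidHom_apply, ← pow_mul, Nat.mul_div_cancel' hm,
      pow_card_eq_one']
  have hcard : Nat.card (powMonoidHom (Nat.card G / m) : G →* G).ker ≤
      Nat.card (powMonoidHom m : G →* G).range := by
    rw [IsCyclic.card_powMonoidHom_ker, IsCyclic.card_powMonoidHom_range,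
      Nat.gcd_eq_right (Nat.div_dvd_of_dvd hm), Nat.gcd_eq_right hm]
  obtain ⟨y, hy⟩ := (Subgroup.eq_of_le_of_card_ge hle hcard).ge (MonoidHom.mem_ker.mpr hx)
  exact ⟨y, hy⟩

theorem FiniteField.exists_pow_eq_of_pow_card_sub_one_div_eq_one {F : Type*} [Field F]
    [Fintype F] {m : ℕ} (hm : m ∣ Fintype.card F - 1) {a : F} (ha : a ≠ 0)
    (h : a ^ ((Fintype.card F - 1) / m) = 1) : ∃ c : F, c ^ m = a := by
  classical
  rw [← Fintype.card_units, ← Nat.card_eq_fintype_card] at hm h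
  obtain ⟨c, hc⟩ := IsCyclic.exists_pow_eq_of_pow_card_div_eq_one hm
    (x := Units.mk0 a ha) (Units.ext (by simpa using h))
  exact ⟨c, by simpa using congrArg Units.val hc⟩

theorem orderOf_pow_card_sub_one_div_of_irreducible {F : Type*} [Field F] [Fintype F] {n : ℕ}
    (hdvd : n ∣ Fintype.card F - 1) {a : F} (ha : a ≠ 0) (hirr : Irreducible (X ^ n - C a)) :
    orderOf (a ^ ((Fintype.card F - 1) / n)) = n := by
  set h := a ^ ((Fintype.card F - 1) / n)
  have hpow : h ^ n = 1 := by
    rw [← pow_mul, Nat.div_mul_cancel hdvd, FiniteField.pow_card_sub_one_eq_one a ha]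
  obtain ⟨m, hm⟩ := orderOf_dvd_of_pow_eq_one hpow
  have hmn : m ∣ n := Dvd.intro_left _ hm.symm
  have ha_pow : a ^ ((Fintype.card F - 1) / m) = 1 := by
    obtain ⟨d, hd⟩ := id hdvd
    have hn : 0 < n := Nat.pos_of_ne_zero (ne_zero_of_irreducible_X_pow_sub_C hirr)
    have hexp : (Fintype.card F - 1) / m = (Fintype.card F - 1) / n * orderOf h := by
      rw [hd, Nat.mul_div_cancel_left d hn]
      refine Nat.div_eq_of_eq_mul_left (Nat.pos_of_dvd_of_pos hmn hn) ?_
      rw [hm]; ring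
    rw [hexp, pow_mul, pow_orderOf_eq_one]
  obtain ⟨c, hc⟩ :=
    FiniteField.exists_pow_eq_of_pow_card_sub_one_div_eq_one (hmn.trans hdvd) ha ha_pow
  have hm1 : m = 1 := by
    by_contra hm1
    exact pow_ne_of_irreducible_X_pow_sub_C hirr hmn hm1 c hc
  rw [hm, hm1, mul_one]

theorem eval_eq_neg_div_of_add_mul_eq {K : Type*} [Field K] {f g t p : K[X]} {x : K}
    (hfgt : f + g * t = p) (hp : p.eval x = 0) (hg : g.eval x ≠ 0) :
    t.eval x = -f.eval x / g.eval x := by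
  subst hfgt
  rw [eval_add, eval_mul] at hp
  rw [eq_div_iff hg]
  linear_combination hp

theorem interpolation_points_of_list_decoding_general
    (q n : ℕ) (hn : 2 ≤ n) (hdvd : n ∣ q - 1)
    (F : Type*) [Field F] [Fintype F] (hF : Fintype.card F = q)
    (a : F) (hirr : Irreducible (X ^ n - C a : F[X]))
    (b : F) (hb : b ≠ 0) (h : F) (hh : h = a ^ ((q - 1) / n))
    (β : Fin n → F) (hβ : ∀ i : Fin n, β i = -b * (h ^ (i : ℕ))⁻¹) :
    (∀ i j : Fin n, β i = β j → i = j) ∧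
    (∀ i : Fin n, β i ^ n ≠ a) ∧
    (∀ (e : Fin n → ℕ) (f t : F[X]),
      f + (X ^ n - C a) * t = ∏ i : Fin n, (C (h ^ (i : ℕ)) * X + C b) ^ e i →
      ∀ i : Fin n, 1 ≤ e i → t.eval (β i) = -f.eval (β i) / (β i ^ n - a)) := by
  have ha : a ≠ 0 := ne_zero_of_irreducible_X_pow_sub_C' (by omega) hirr
  have hno_root (x : F) : x ^ n ≠ a :=
    pow_ne_of_irreducible_X_pow_sub_C hirr dvd_rfl (by omega) x
  have horder : orderOf h = n := by
    subst hh hF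
    exact orderOf_pow_card_sub_one_div_of_irreducible hdvd ha hirr
  have hh0 : h ≠ 0 := hh ▸ pow_ne_zero _ ha
  refine ⟨fun i j hij => ?_, fun i => hno_root (β i), fun e f t hft i hei => ?_⟩
  · rw [hβ, hβ, mul_right_inj' (neg_ne_zero.mpr hb), inv_inj] at hij
    exact Fin.ext (pow_injOn_Iio_orderOf (horder ▸ i.isLt) (horder ▸ j.isLt) hij)
  · have hroot : h ^ (i : ℕ) * β i + b = 0 := by
      rw [hβ]
      field_simp
      ring
    have hprod : (∏ j : Fin n, (C (h ^ (j : ℕ)) * X + C b) ^ e j).eval (β i) = 0 := by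
      rw [eval_prod]
      refine Finset.prod_eq_zero (Finset.mem_univ i) ?_
      rw [eval_pow, eval_add, eval_mul, eval_C, eval_X, eval_C, hroot, zero_pow (by omega)]
    simpa using eval_eq_neg_div_of_add_mul_eq hft hprod
      (by simpa [sub_eq_zero] using hno_root (β i))

/-- For `β i = -b * h^{-i}` (`0 ≤ i < n`): the `β i` are pairwise distinct, `β i ^ n ≠ a`,
and whenever `f + (X^n - a) t = ∏ i < n, (h^i X + b)^(e i)` and `e i ≥ 1`, one has
`t(β i) = -f(β i) / (β i ^ n - a)`. -/
theorem interpolation_points_of_list_decoding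
    (q n : ℕ) (hq : IsPrimePow q) (hn : 2 ≤ n) (hdvd : n ∣ q - 1)
    (F : Type*) [Field F] [Fintype F] (hF : Fintype.card F = q)
    (a : F) (hirr : Irreducible (X ^ n - C a : F[X]))
    (b : F) (hb : b ≠ 0) (h : F) (hh : h = a ^ ((q - 1) / n))
    (β : Fin n → F) (hβ : ∀ i : Fin n, β i = -b * (h ^ (i : ℕ))⁻¹) :
    (∀ i j : Fin n, β i = β j → i = j) ∧
    (∀ i : Fin n, β i ^ n ≠ a) ∧
    (∀ (e : Fin n → ℕ) (f t : F[X]),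
      f + (X ^ n - C a) * t = ∏ i : Fin n, (C (h ^ (i : ℕ)) * X + C b) ^ e i →
      ∀ i : Fin n, 1 ≤ e i → t.eval (β i) = -f.eval (β i) / (β i ^ n - a)) :=
  interpolation_points_of_list_decoding_general q n hn hdvd F hF a hirr b hb h hh β hβ
end

section
/- Let p be a prime, a ∈ Z/pZ nonzero so that X^p - X - a is irreducible over Z/pZ, K = (Z/pZ)[X]/(X^p - X - a), α ∈ K the image of X, b ∈ Z/pZ, and g = α + b. Then for all natural numbers e, e' with e < p^p, e' < p^p, S_p(e) ≤ p - 1, S_p(e') ≤ p - 1, and g^e = g^{e'}, one has e = e'. (The map e ↦ g^e is injective on exponents below p^p whose base-p sum of digits is at most p - 1.) -/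
open Polynomial

/-- The product polynomial `∏ (X + C (c + i*a))^(L i)` defined recursively. -/
noncomputable def ASQ (p : ℕ) (a : ZMod p) : ZMod p → List ℕ → (ZMod p)[X]
  | _, [] => 1
  | c, d :: L => (X + C c) ^ d * ASQ p a (c + a) L

lemma ASQ_nil (p : ℕ) (a c : ZMod p) : ASQ p a c [] = 1 := rfl

lemma ASQ_cons (p : ℕ) (a c : ZMod p) (d : ℕ) (L : List ℕ) :
    ASQ p a c (d :: L) = (X + C c) ^ d * ASQ p a (c + a) L := rfl

lemma ASQ_monic (p : ℕ) (a : ZMod p) : ∀ (L : List ℕ) (c : ZMod p), (ASQ p a c L).Monic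
  | [], _ => monic_one
  | d :: L, c => ((monic_X_add_C c).pow d).mul (ASQ_monic p a L (c + a))

lemma ASQ_natDegree (p : ℕ) [Fact p.Prime] (a : ZMod p) : ∀ (L : List ℕ) (c : ZMod p),
    (ASQ p a c L).natDegree = L.sum
  | [], _ => natDegree_one
  | d :: L, c => by
    rw [ASQ_cons, ((monic_X_add_C c).pow d).natDegree_mul (ASQ_monic p a L (c + a)),
      natDegree_pow, natDegree_X_add_C, ASQ_natDegree p a L (c + a), List.sum_cons, mul_one]

lemma ASQ_ne_zero (p : ℕ) [Fact p.Prime] (a : ZMod p) (L : List ℕ) (c : ZMod p) :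
    ASQ p a c L ≠ 0 := (ASQ_monic p a L c).ne_zero

lemma ASQ_eval_ne_zero (p : ℕ) [Fact p.Prime] (a : ZMod p) :
    ∀ (L : List ℕ) (c x : ZMod p), (∀ i < L.length, x + (c + (i : ZMod p) * a) ≠ 0) →
      eval x (ASQ p a c L) ≠ 0
  | [], _, _, _ => by simp [ASQ_nil]
  | d :: L, c, x, h => by
    rw [ASQ_cons, eval_mul, eval_pow, eval_add, eval_X, eval_C]
    refine mul_ne_zero (pow_ne_zero _ ?_) (ASQ_eval_ne_zero p a L (c + a) x ?_)
    · have := h 0 (by simp)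
      simpa using this
    · intro i hi
      have := h (i + 1) (by simpa using Nat.succ_lt_succ hi)
      push_cast at this ⊢
      intro hcon
      exact this (by linear_combination hcon)

lemma ASQ_rootMultiplicity (p : ℕ) [Fact p.Prime] (a : ZMod p) (ha : a ≠ 0)
    (d : ℕ) (L : List ℕ) (c : ZMod p) (hL : L.length ≤ p - 1) :
    rootMultiplicity (-c) (ASQ p a c (d :: L)) = d := by
  have htail : eval (-c) (ASQ p a (c + a) L) ≠ 0 := by
    refine ASQ_eval_ne_zero p a L (c + a) (-c) ?_
    intro i hi
    have hip : i + 1 < p := by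
      have h1 : 1 ≤ p := (Fact.out : p.Prime).one_lt.le
      omega
    have : ((i : ZMod p) + 1) * a ≠ 0 := by
      refine mul_ne_zero ?_ ha
      have : ((i + 1 : ℕ) : ZMod p) ≠ 0 := by
        rw [Ne, ZMod.natCast_eq_zero_iff]
        exact Nat.not_dvd_of_pos_of_lt (Nat.succ_pos i) hip
      simpa using this
    intro hcon
    apply this
    linear_combination hcon
  rw [ASQ_cons, rootMultiplicity_mul
      (mul_ne_zero (pow_ne_zero _ (X_add_C_ne_zero c)) (ASQ_ne_zero p a L (c + a)))]
  have h1 : rootMultiplicity (-c) ((X + C c) ^ d) = d := by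
    have : (X + C c : (ZMod p)[X]) = X - C (-c) := by rw [map_neg, sub_neg_eq_add]
    rw [this, rootMultiplicity_X_sub_C_pow]
  rw [h1, rootMultiplicity_eq_zero htail, add_zero]

lemma ASQ_inj (p : ℕ) [Fact p.Prime] (a : ZMod p) (ha : a ≠ 0) :
    ∀ (n : ℕ), n ≤ p → ∀ (L L' : List ℕ) (c : ZMod p),
      L.length = n → L'.length = n → ASQ p a c L = ASQ p a c L' → L = L'
  | 0, _, L, L', _, hL, hL', _ => by
    rw [List.length_eq_zero_iff.mp hL, List.length_eq_zero_iff.mp hL']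
  | n + 1, hn, d :: L, d' :: L', c, hL, hL', heq => by
    have hLlen : L.length ≤ p - 1 := by simp at hL; omega
    have hL'len : L'.length ≤ p - 1 := by simp at hL'; omega
    have hd : d = d' := by
      have h1 := ASQ_rootMultiplicity p a ha d L c hLlen
      have h2 := ASQ_rootMultiplicity p a ha d' L' c hL'len
      rw [heq, h2] at h1
      exact h1.symm
    subst hd
    have htail : ASQ p a (c + a) L = ASQ p a (c + a) L' := by
      rw [ASQ_cons, ASQ_cons] at heq
      exact mul_left_cancel₀ (pow_ne_zero _ (X_add_C_ne_zero c)) heq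
    have := ASQ_inj p a ha n (by omega) L L' (c + a) (by simpa using hL) (by simpa using hL') htail
    rw [this]
  | n + 1, _, [], _, _, hL, _, _ => by simp at hL
  | n + 1, _, _ :: _, [], _, _, hL', _ => by simp at hL'

lemma ASQ_replicate_zero (p : ℕ) (a : ZMod p) :
    ∀ (m : ℕ) (c : ZMod p), ASQ p a c (List.replicate m 0) = 1
  | 0, _ => rfl
  | m + 1, c => by
    rw [List.replicate_succ, ASQ_cons, pow_zero, one_mul, ASQ_replicate_zero p a m (c + a)]

lemma ASQ_append_replicate (p : ℕ) (a : ZMod p) :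
    ∀ (L : List ℕ) (m : ℕ) (c : ZMod p),
      ASQ p a c (L ++ List.replicate m 0) = ASQ p a c L
  | [], m, c => by simpa [ASQ_nil] using ASQ_replicate_zero p a m c
  | d :: L, m, c => by
    rw [List.cons_append, ASQ_cons, ASQ_cons, ASQ_append_replicate p a L m (c + a)]

lemma ofDigits_replicate_zero (p : ℕ) (m : ℕ) :
    Nat.ofDigits p (List.replicate m 0) = 0 := by
  induction m with
  | zero => rfl
  | succ m ih => rw [List.replicate_succ, Nat.ofDigits_cons, ih]; simp

lemma ofDigits_append_replicate (p : ℕ) (L : List ℕ) (m : ℕ) :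
    Nat.ofDigits p (L ++ List.replicate m 0) = Nat.ofDigits p L := by
  rw [Nat.ofDigits_append, ofDigits_replicate_zero]; simp

section AS

variable (p : ℕ) [Fact p.Prime] (a : ZMod p)

/-- Frobenius-type identity for `root f + of f s` in the Artin-Schreier extension. -/
lemma AS_pow_char (hirr : Irreducible (X ^ p - X - C a : (ZMod p)[X])) (s : ZMod p) :
    (AdjoinRoot.root (X ^ p - X - C a : (ZMod p)[X]) +
      AdjoinRoot.of (X ^ p - X - C a : (ZMod p)[X]) s) ^ p =
    AdjoinRoot.root (X ^ p - X - C a : (ZMod p)[X]) +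
      AdjoinRoot.of (X ^ p - X - C a : (ZMod p)[X]) (s + a) := by
  haveI := Fact.mk hirr
  haveI : CharP (AdjoinRoot (X ^ p - X - C a : (ZMod p)[X])) p :=
    charP_of_injective_algebraMap
      (algebraMap (ZMod p) (AdjoinRoot (X ^ p - X - C a : (ZMod p)[X]))).injective p
  have hroot : (AdjoinRoot.root (X ^ p - X - C a : (ZMod p)[X])) ^ p =
      AdjoinRoot.root (X ^ p - X - C a : (ZMod p)[X]) +
        AdjoinRoot.of (X ^ p - X - C a : (ZMod p)[X]) a := by
    have h0 : AdjoinRoot.mk (X ^ p - X - C a : (ZMod p)[X]) (X ^ p - X - C a) = 0 :=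
      AdjoinRoot.mk_self
    rw [map_sub, map_sub, map_pow, AdjoinRoot.mk_X] at h0
    rw [show (AdjoinRoot.mk (X ^ p - X - C a : (ZMod p)[X])) (C a) =
        AdjoinRoot.of (X ^ p - X - C a : (ZMod p)[X]) a from rfl] at h0
    linear_combination h0
  rw [add_pow_char, hroot, ← map_pow, ZMod.pow_card, map_add]
  ring

lemma AS_pow_ofDigits (hirr : Irreducible (X ^ p - X - C a : (ZMod p)[X])) :
    ∀ (L : List ℕ) (s : ZMod p),
      (AdjoinRoot.root (X ^ p - X - C a : (ZMod p)[X]) +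
        AdjoinRoot.of (X ^ p - X - C a : (ZMod p)[X]) s) ^ (Nat.ofDigits p L) =
      AdjoinRoot.mk (X ^ p - X - C a : (ZMod p)[X]) (ASQ p a s L)
  | [], s => by simp [ASQ_nil]
  | d :: L, s => by
    rw [Nat.ofDigits_cons, ASQ_cons, map_mul, map_pow, map_add, AdjoinRoot.mk_X,
      AdjoinRoot.mk_C, ← AS_pow_ofDigits hirr L (s + a), ← AS_pow_char p a hirr s,
      pow_add, pow_mul]

end AS

lemma digits_len_le_of_lt_pow {p e n : ℕ} (hp : 1 < p) (he : e < p ^ n) :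
    (Nat.digits p e).length ≤ n := by
  rcases Nat.eq_zero_or_pos e with rfl | he0
  · simp
  · rw [Nat.digits_len p e hp he0.ne']
    have := Nat.log_lt_of_lt_pow he0.ne' he
    omega

/-- Injectivity of `e ↦ g^e` on exponents below `p^p` with base-`p` digit sum at most `p - 1`,
where `g = α + b` in the Artin-Schreier extension `K = (Z/pZ)[X]/(X^p - X - a)`. -/
theorem artinSchreier_bounded_sum_of_digits_dlog_injective
    (p : ℕ) [Fact p.Prime] (a : ZMod p) (ha : a ≠ 0)
    (hirr : Irreducible (X ^ p - X - C a : (ZMod p)[X]))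
    (b : ZMod p)
    (e e' : ℕ) (he : e < p ^ p) (he' : e' < p ^ p)
    (hs : (Nat.digits p e).sum ≤ p - 1) (hs' : (Nat.digits p e').sum ≤ p - 1)
    (hpow :
      (AdjoinRoot.root (X ^ p - X - C a : (ZMod p)[X]) +
        AdjoinRoot.of (X ^ p - X - C a : (ZMod p)[X]) b) ^ e =
      (AdjoinRoot.root (X ^ p - X - C a : (ZMod p)[X]) +
        AdjoinRoot.of (X ^ p - X - C a : (ZMod p)[X]) b) ^ e') :
    e = e' := by
  have hp1 : 1 < p := (Fact.out : p.Prime).one_lt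
  set f : (ZMod p)[X] := X ^ p - X - C a with hf
  set L : List ℕ := Nat.digits p e with hL
  set L' : List ℕ := Nat.digits p e' with hL'
  -- translate the power hypothesis into equality of images of ASQ polynomials
  have h1 : AdjoinRoot.mk f (ASQ p a b L) = AdjoinRoot.mk f (ASQ p a b L') := by
    rw [← AS_pow_ofDigits p a hirr L b, ← AS_pow_ofDigits p a hirr L' b, hL, hL',
      Nat.ofDigits_digits, Nat.ofDigits_digits]
    exact hpow
  -- degree of f is p
  have hdegf : (f : (ZMod p)[X]).degree = p := by
    rw [hf]
    rw [sub_sub]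
    have h2 : (X + C a : (ZMod p)[X]).degree ≤ 1 := by
      calc (X + C a : (ZMod p)[X]).degree ≤ max (X : (ZMod p)[X]).degree (C a).degree :=
            degree_add_le _ _
        _ ≤ 1 := by
            simp only [degree_X, max_le_iff]
            exact ⟨le_refl _, (degree_C_le).trans (by norm_num)⟩
    rw [degree_sub_eq_left_of_degree_lt]
    · exact degree_X_pow p
    · rw [degree_X_pow]
      exact lt_of_le_of_lt h2 (by exact_mod_cast hp1)
  -- the two polynomials are equal
  have hdeg : ∀ (M : List ℕ), M.sum ≤ p - 1 → (ASQ p a b M).degree < (f : (ZMod p)[X]).degree := by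
    intro M hM
    rw [hdegf, degree_eq_natDegree (ASQ_ne_zero p a M b), ASQ_natDegree]
    exact_mod_cast lt_of_le_of_lt hM (by omega)
  have hdvd : f ∣ ASQ p a b L - ASQ p a b L' := by
    rw [← AdjoinRoot.mk_eq_zero, map_sub, sub_eq_zero]
    exact h1
  have heq : ASQ p a b L = ASQ p a b L' := by
    have hlt : (ASQ p a b L - ASQ p a b L').degree < f.degree :=
      lt_of_le_of_lt (degree_sub_le _ _) (max_lt (hdeg L hs) (hdeg L' hs'))
    have := Polynomial.eq_zero_of_dvd_of_degree_lt hdvd hlt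
    exact sub_eq_zero.mp this
  -- pad the digit lists to length p and use injectivity
  have hlen : L.length ≤ p := digits_len_le_of_lt_pow hp1 he
  have hlen' : L'.length ≤ p := digits_len_le_of_lt_pow hp1 he'
  set Lp : List ℕ := L ++ List.replicate (p - L.length) 0 with hLp
  set Lp' : List ℕ := L' ++ List.replicate (p - L'.length) 0 with hLp'
  have hplen : Lp.length = p := by simp [hLp]; omega
  have hplen' : Lp'.length = p := by simp [hLp']; omega
  have heqp : ASQ p a b Lp = ASQ p a b Lp' := by
    rw [hLp, hLp', ASQ_append_replicate, ASQ_append_replicate]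
    exact heq
  have hfin : Lp = Lp' := ASQ_inj p a ha p le_rfl Lp Lp' b hplen hplen' heqp
  calc e = Nat.ofDigits p L := (Nat.ofDigits_digits p e).symm
    _ = Nat.ofDigits p Lp := (ofDigits_append_replicate p L _).symm
    _ = Nat.ofDigits p Lp' := by rw [hfin]
    _ = Nat.ofDigits p L' := ofDigits_append_replicate p L' _
    _ = e' := Nat.ofDigits_digits p e'
end
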